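/- Under the hypotheses of the continuous L²-energy inequality — namely b, T > 0, U_b : [0,T] → ℝ continuous, u : [0,T] × [0,b] → ℝ continuously differentiable, ũ(t,·) the radial average of u(t,·), g(t,r) = exp(−∫_r^b (1/s)(u(t,s) − ũ(t,s))² ds), g̃(t,·) the radial average of g(t,·), with u_t = ∂_r((1/2)g̃u) − (1/2)g̃_r·ũ on (0,T) × (0,b) and u(t,b) = U_b(t) — one has for every t ∈ [0,T]: ∫_0^b u(t,r)² dr ≤ ∫_0^b u(0,r)² dr + (1/2)·∫_0^t U_b(s)² ds + t/2. -/

import Mathlib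

/-!
Fix a time and write `v = u(t, ·)`. Since `g' = g (v - ṽ)² / r` and `g̃' = (g - g̃) / r`,
the function `Φ = ½ g̃ v² + ½ g` satisfies
`Φ' - 2 v (∂_r(½ g̃ v) - ½ g̃' ṽ) = ½ g̃' ṽ² + ½ g̃ (v - ṽ)² / r`,
which is nonnegative because `g` is increasing, so that `0 ≤ g̃ ≤ g ≤ 1`. Integrating in `r` gives
`∫₀ᵇ 2 v u_t ≤ Φ(b) - Φ(0⁺) ≤ ½ U_b² + ½`, the differential form of the energy inequality.
As `u` is `C¹` on the compact rectangle, `t ↦ ∫₀ᵇ u²` may be differentiated under the integral sign,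
and integrating the differential inequality in time gives the estimate.
-/

open MeasureTheory intervalIntegral Set Filter Topology
open scoped Interval

noncomputable def radialAverage (f : ℝ → ℝ) (r : ℝ) : ℝ := (1 / r) * ∫ s in (0:ℝ)..r, f s

section RadialAverage

variable {f : ℝ → ℝ} {b r : ℝ}

lemma radialAverage_nonneg (hr : 0 ≤ r) (hf : ∀ s ∈ Ioc 0 r, 0 ≤ f s) :
    0 ≤ radialAverage f r := by
  refine mul_nonneg (by positivity) ?_
  rw [integral_of_le hr]
  exact setIntegral_nonneg measurableSet_Ioc hf

lemma radialAverage_le_of_le {c : ℝ} (hr : 0 < r) (hf : IntervalIntegrable f volume 0 r)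
    (hc : ∀ s ∈ Ioc 0 r, f s ≤ c) : radialAverage f r ≤ c := by
  have hint : ∫ s in (0:ℝ)..r, f s ≤ r * c := by
    simpa using integral_mono_on_of_le_Ioo hr.le hf intervalIntegrable_const
      fun s hs => hc s (Ioo_subset_Ioc_self hs)
  rw [radialAverage, one_div, inv_mul_le_iff₀ hr]
  exact hint

lemma hasDerivAt_radialAverage (hr : r ≠ 0) (hint : IntervalIntegrable f volume 0 r)
    (hmeas : StronglyMeasurableAtFilter f (𝓝 r)) (hc : ContinuousAt f r) :
    HasDerivAt (radialAverage f) ((f r - radialAverage f r) / r) r := by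
  have hinv : HasDerivAt (fun x : ℝ => 1 / x) (-(r ^ 2)⁻¹) r := by
    simpa only [one_div] using hasDerivAt_inv hr
  refine (hinv.fun_mul (integral_hasDerivAt_right hint hmeas hc)).congr_deriv ?_
  unfold radialAverage
  field_simp
  ring

lemma continuousOn_radialAverage (hb : 0 ≤ b) (hf : IntegrableOn f (Icc 0 b)) :
    ContinuousOn (radialAverage f) (Ioc 0 b) := by
  have hprim := continuousOn_primitive_interval (μ := volume) (by rwa [uIcc_of_le hb])
  rw [uIcc_of_le hb] at hprim
  exact (continuousOn_const.div continuousOn_id fun s hs => hs.1.ne').mul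
    (hprim.mono Ioc_subset_Icc_self)

lemma radialAverage_le_of_monotoneOn (hf : IntegrableOn f (Icc 0 b))
    (hmono : MonotoneOn f (Ioc 0 b)) (hr : r ∈ Ioc 0 b) : radialAverage f r ≤ f r :=
  radialAverage_le_of_le hr.1
    ((intervalIntegrable_iff_integrableOn_Icc_of_le hr.1.le).2
      (hf.mono_set (Icc_subset_Icc_right hr.2)))
    fun s hs => hmono ⟨hs.1, hs.2.trans hr.2⟩ hr hs.2

lemma hasDerivAt_radialAverage_of_continuousOn
    (hf : IntegrableOn f (Icc 0 b)) (hfc : ContinuousOn f (Ioo 0 b)) (hr : r ∈ Ioo 0 b) :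
    HasDerivAt (radialAverage f) ((f r - radialAverage f r) / r) r :=
  hasDerivAt_radialAverage hr.1.ne'
    ((intervalIntegrable_iff_integrableOn_Icc_of_le hr.1.le).2
      (hf.mono_set (Icc_subset_Icc_right hr.2.le)))
    (hfc.stronglyMeasurableAtFilter isOpen_Ioo r hr) (hfc.continuousAt (isOpen_Ioo.mem_nhds hr))

end RadialAverage

lemma continuousOn_integral_Ioc_of_continuousOn {h : ℝ → ℝ} {a b : ℝ}
    (hh : ContinuousOn h (Ioc a b)) :
    ContinuousOn (fun x => ∫ s in x..b, h s) (Ioc a b) := by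
  refine continuousOn_of_locally_continuousOn fun x hx => ?_
  obtain ⟨c, hac, hcx⟩ := exists_between hx.1
  refine ⟨Ioi c, isOpen_Ioi, hcx, ?_⟩
  have hsub : Icc c b ⊆ Ioc a b := Icc_subset_Ioc_iff (hcx.le.trans hx.2) |>.2 ⟨hac, le_rfl⟩
  have hprim := continuousOn_primitive_interval_left (μ := volume)
    (by rw [uIcc_of_le (hcx.le.trans hx.2)]; exact (hh.mono hsub).integrableOn_Icc)
  rw [uIcc_of_le (hcx.le.trans hx.2)] at hprim
  exact hprim.mono fun y hy => ⟨hy.2.le, hy.1.2⟩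

lemma integral_le_of_forall_mem_Ioo_integral_le {F : ℝ → ℝ} {a b c : ℝ} (hab : a < b)
    (hF : IntegrableOn F (Icc a b)) (h : ∀ x ∈ Ioo a b, ∫ y in x..b, F y ≤ c) :
    ∫ y in a..b, F y ≤ c := by
  have hprim := continuousOn_primitive_interval_left (μ := volume) (b := b)
    (by rwa [uIcc_of_le hab.le])
  rw [uIcc_of_le hab.le] at hprim
  have hlim := (hprim a (left_mem_Icc.2 hab.le)).mono Ioo_subset_Icc_self
  rw [ContinuousWithinAt, nhdsWithin_Ioo_eq_nhdsGT hab] at hlim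
  exact le_of_tendsto hlim (eventually_of_mem (Ioo_mem_nhdsGT hab) h)

section Weight

variable {h G : ℝ → ℝ} {b : ℝ}

lemma weight_le_one (hG : ∀ r ∈ Ioc 0 b, G r = Real.exp (-∫ s in r..b, h s))
    (hh0 : ∀ s ∈ Ioc 0 b, 0 ≤ h s) {r : ℝ} (hr : r ∈ Ioc 0 b) : G r ≤ 1 := by
  rw [hG r hr, Real.exp_le_one_iff, neg_nonpos]
  exact integral_nonneg hr.2 fun s hs => hh0 s ⟨hr.1.trans_le hs.1, hs.2⟩

lemma weight_monotoneOn (hG : ∀ r ∈ Ioc 0 b, G r = Real.exp (-∫ s in r..b, h s))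
    (hh : ContinuousOn h (Ioc 0 b)) (hh0 : ∀ s ∈ Ioc 0 b, 0 ≤ h s) :
    MonotoneOn G (Ioc 0 b) := by
  intro r₁ hr₁ r₂ hr₂ hle
  have hint : ∀ {c d}, c ∈ Ioc 0 b → d ∈ Ioc 0 b → IntervalIntegrable h volume c d :=
    fun hc hd => (hh.mono (ordConnected_Ioc.uIcc_subset hc hd)).intervalIntegrable
  have hb : b ∈ Ioc 0 b := right_mem_Ioc.2 (hr₁.1.trans_le hr₁.2)
  have hsplit := integral_add_adjacent_intervals (hint hr₁ hr₂) (hint hr₂ hb)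
  have hmid : 0 ≤ ∫ s in r₁..r₂, h s :=
    integral_nonneg hle fun s hs => hh0 s ⟨hr₁.1.trans_le hs.1, hs.2.trans hr₂.2⟩
  rw [hG r₁ hr₁, hG r₂ hr₂, Real.exp_le_exp, ← hsplit]
  linarith

lemma hasDerivAt_weight (hG : ∀ r ∈ Ioc 0 b, G r = Real.exp (-∫ s in r..b, h s))
    (hh : ContinuousOn h (Ioc 0 b)) {r : ℝ} (hr : r ∈ Ioo 0 b) :
    HasDerivAt G (G r * h r) r := by
  have hhr : ContinuousOn h (Ioo 0 b) := hh.mono Ioo_subset_Ioc_self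
  have hrb : uIcc r b ⊆ Ioc 0 b :=
    ordConnected_Ioc.uIcc_subset (Ioo_subset_Ioc_self hr) (right_mem_Ioc.2 (hr.1.trans hr.2))
  have hA := integral_hasDerivAt_left (hh.mono hrb).intervalIntegrable
    (hhr.stronglyMeasurableAtFilter isOpen_Ioo r hr) (hhr.continuousAt (isOpen_Ioo.mem_nhds hr))
  have hGr := hG r (Ioo_subset_Ioc_self hr)
  refine (hA.neg.exp.congr_deriv ?_).congr_of_eventuallyEq ?_
  · rw [hGr]
    simp only [Pi.neg_apply]
    ring
  · filter_upwards [isOpen_Ioo.mem_nhds hr] with x hx using hG x (Ioo_subset_Ioc_self hx)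

lemma continuousOn_weight (hG : ∀ r ∈ Ioc 0 b, G r = Real.exp (-∫ s in r..b, h s))
    (hh : ContinuousOn h (Ioc 0 b)) : ContinuousOn G (Ioc 0 b) :=
  (Real.continuous_exp.comp_continuousOn
    (continuousOn_integral_Ioc_of_continuousOn hh).neg).congr hG

lemma integrableOn_weight (hG : ∀ r ∈ Ioc 0 b, G r = Real.exp (-∫ s in r..b, h s))
    (hh : ContinuousOn h (Ioc 0 b)) (hh0 : ∀ s ∈ Ioc 0 b, 0 ≤ h s) :
    IntegrableOn G (Icc 0 b) := by
  refine (integrableOn_Icc_iff_integrableOn_Ioc enorm_ne_top).2 <|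
    IntegrableOn.of_bound measure_Ioc_lt_top
      ((continuousOn_weight hG hh).aestronglyMeasurable measurableSet_Ioc) 1 ?_
  refine ae_restrict_of_forall_mem measurableSet_Ioc fun r hr => ?_
  rw [Real.norm_eq_abs, abs_of_pos (by rw [hG r hr]; exact Real.exp_pos _)]
  exact weight_le_one hG hh0 hr

variable {tg : ℝ → ℝ}

lemma averagedWeight_nonneg (hG : ∀ r ∈ Ioc 0 b, G r = Real.exp (-∫ s in r..b, h s))
    (htg : ∀ r ∈ Ioc 0 b, tg r = radialAverage G r) {r : ℝ} (hr : r ∈ Ioc 0 b) : 0 ≤ tg r :=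
  htg r hr ▸ radialAverage_nonneg hr.1.le fun s hs =>
    (hG s ⟨hs.1, hs.2.trans hr.2⟩).symm ▸ (Real.exp_pos _).le

lemma averagedWeight_le_weight (hG : ∀ r ∈ Ioc 0 b, G r = Real.exp (-∫ s in r..b, h s))
    (hh : ContinuousOn h (Ioc 0 b)) (hh0 : ∀ s ∈ Ioc 0 b, 0 ≤ h s)
    (htg : ∀ r ∈ Ioc 0 b, tg r = radialAverage G r) {r : ℝ} (hr : r ∈ Ioc 0 b) : tg r ≤ G r :=
  htg r hr ▸ radialAverage_le_of_monotoneOn (integrableOn_weight hG hh hh0)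
    (weight_monotoneOn hG hh hh0) hr

lemma hasDerivAt_averagedWeight (hG : ∀ r ∈ Ioc 0 b, G r = Real.exp (-∫ s in r..b, h s))
    (hh : ContinuousOn h (Ioc 0 b)) (hh0 : ∀ s ∈ Ioc 0 b, 0 ≤ h s)
    (htg : ∀ r ∈ Ioc 0 b, tg r = radialAverage G r) {r : ℝ} (hr : r ∈ Ioo 0 b) :
    HasDerivAt tg ((G r - tg r) / r) r := by
  rw [htg r (Ioo_subset_Ioc_self hr)]
  refine (hasDerivAt_radialAverage_of_continuousOn (integrableOn_weight hG hh hh0)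
    ((continuousOn_weight hG hh).mono Ioo_subset_Ioc_self) hr).congr_of_eventuallyEq ?_
  filter_upwards [isOpen_Ioo.mem_nhds hr] with x hx using htg x (Ioo_subset_Ioc_self hx)

end Weight

noncomputable def bondiRhs (v tv tg : ℝ → ℝ) (r : ℝ) : ℝ :=
  deriv (fun x => 1 / 2 * tg x * v x) r - 1 / 2 * deriv tg r * tv r

lemma two_mul_bondiRhs_le {v tv g tg : ℝ → ℝ} {r : ℝ} (hr : 0 < r)
    (hv : DifferentiableAt ℝ v r)
    (htg : HasDerivAt tg ((g r - tg r) / r) r) (htg0 : 0 ≤ tg r) (htg_le : tg r ≤ g r) :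
    2 * v r * bondiRhs v tv tg r ≤ 1 / 2 * ((g r - tg r) / r) * v r ^ 2
      + 1 / 2 * tg r * (2 * v r * deriv v r) + g r * (1 / r * (v r - tv r) ^ 2) / 2 := by
  rw [bondiRhs, ((htg.const_mul (1 / 2)).fun_mul hv.hasDerivAt).deriv, htg.deriv]
  have hgap : 0 ≤ (g r - tg r) / r * tv r ^ 2 / 2 + tg r * (1 / r * (v r - tv r) ^ 2) / 2 := by
    have : 0 ≤ (g r - tg r) / r := div_nonneg (sub_nonneg.2 htg_le) hr.le
    positivity
  have hid : 1 / 2 * ((g r - tg r) / r) * v r ^ 2 + 1 / 2 * tg r * (2 * v r * deriv v r)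
      + g r * (1 / r * (v r - tv r) ^ 2) / 2
      - 2 * v r * (1 / 2 * ((g r - tg r) / r) * v r + 1 / 2 * tg r * deriv v r
        - 1 / 2 * ((g r - tg r) / r) * tv r)
      = (g r - tg r) / r * tv r ^ 2 / 2 + tg r * (1 / r * (v r - tv r) ^ 2) / 2 := by
    field_simp
    ring
  linarith

noncomputable def bondiLyapunov (v g tg : ℝ → ℝ) (r : ℝ) : ℝ := 1 / 2 * tg r * v r ^ 2 + g r / 2

lemma bondiLyapunov_nonneg {v g tg : ℝ → ℝ} {r : ℝ} (htg : 0 ≤ tg r) (hg : 0 ≤ g r) :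
    0 ≤ bondiLyapunov v g tg r := by
  unfold bondiLyapunov
  positivity

lemma bondiLyapunov_le {v g tg : ℝ → ℝ} {r : ℝ} (htg : tg r ≤ 1) (hg : g r ≤ 1) :
    bondiLyapunov v g tg r ≤ 1 / 2 * v r ^ 2 + 1 / 2 := by
  unfold bondiLyapunov
  nlinarith [sq_nonneg (v r)]

lemma integral_two_mul_bondiRhs_le_sub {v tv g tg : ℝ → ℝ} {ε b : ℝ} (hε : 0 < ε)
    (hεb : ε ≤ b)
    (hvd : ∀ r ∈ Ioo ε b, DifferentiableAt ℝ v r)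
    (hgd : ∀ r ∈ Ioo ε b, HasDerivAt g (g r * (1 / r * (v r - tv r) ^ 2)) r)
    (htgd : ∀ r ∈ Ioo ε b, HasDerivAt tg ((g r - tg r) / r) r)
    (htg0 : ∀ r ∈ Ioo ε b, 0 ≤ tg r) (htg_le : ∀ r ∈ Ioo ε b, tg r ≤ g r)
    (hΦ : ContinuousOn (bondiLyapunov v g tg) (Icc ε b))
    (hF : IntegrableOn (fun r => 2 * v r * bondiRhs v tv tg r) (Icc ε b)) :
    ∫ r in ε..b, 2 * v r * bondiRhs v tv tg r
      ≤ bondiLyapunov v g tg b - bondiLyapunov v g tg ε := by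
  refine integral_le_sub_of_hasDeriv_right_of_le hεb hΦ (fun r hr => ?_) hF fun r hr =>
    two_mul_bondiRhs_le (hε.trans hr.1) (hvd r hr) (htgd r hr) (htg0 r hr) (htg_le r hr)
  have hv2 : HasDerivAt (fun x => v x ^ 2) (2 * v r * deriv v r) r := by
    simpa using (hvd r hr).hasDerivAt.fun_pow 2
  exact ((((htgd r hr).const_mul (1 / 2)).fun_mul hv2).add
    ((hgd r hr).div_const 2)).hasDerivWithinAt

theorem integral_two_mul_bondiRhs_le {v tv g tg : ℝ → ℝ} {b : ℝ} (hb : 0 < b)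
    (hv : ContinuousOn v (Icc 0 b)) (hvd : ∀ r ∈ Ioo 0 b, DifferentiableAt ℝ v r)
    (htv : ∀ r ∈ Ioc 0 b, tv r = radialAverage v r)
    (hg : ∀ r ∈ Ioc 0 b, g r = Real.exp (-∫ s in r..b, 1 / s * (v s - tv s) ^ 2))
    (htg : ∀ r ∈ Ioc 0 b, tg r = radialAverage g r)
    (hF : IntegrableOn (fun r => 2 * v r * bondiRhs v tv tg r) (Icc 0 b)) :
    ∫ r in (0:ℝ)..b, 2 * v r * bondiRhs v tv tg r ≤ 1 / 2 * v b ^ 2 + 1 / 2 := by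
  set h : ℝ → ℝ := fun s => 1 / s * (v s - tv s) ^ 2
  have hh : ContinuousOn h (Ioc 0 b) :=
    (continuousOn_const.div continuousOn_id fun s hs => hs.1.ne').mul
      (((hv.mono Ioc_subset_Icc_self).sub
        ((continuousOn_radialAverage hb.le hv.integrableOn_Icc).congr htv)).pow 2)
  have hh0 : ∀ s ∈ Ioc 0 b, 0 ≤ h s := fun s hs =>
    mul_nonneg (one_div_nonneg.2 hs.1.le) (sq_nonneg _)
  have hΦc : ContinuousOn (bondiLyapunov v g tg) (Ioc 0 b) :=
    ((continuousOn_const.mul ((continuousOn_radialAverage hb.le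
      (integrableOn_weight hg hh hh0)).congr htg)).mul
      ((hv.mono Ioc_subset_Icc_self).pow 2)).add ((continuousOn_weight hg hh).div_const 2)
  have hb' : b ∈ Ioc 0 b := right_mem_Ioc.2 hb
  have hg1 := weight_le_one hg hh0 hb'
  have hΦb := bondiLyapunov_le (v := v)
    ((averagedWeight_le_weight hg hh hh0 htg hb').trans hg1) hg1
  -- `g` and `g̃` are controlled only on `(0, b]`: argue on `[ε, b]`, then let `ε → 0`.
  refine integral_le_of_forall_mem_Ioo_integral_le hb hF fun ε hε => ?_
  have hεIcc : Icc ε b ⊆ Ioc 0 b := Icc_subset_Ioc_iff hε.2.le |>.2 ⟨hε.1, le_rfl⟩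
  have hεIoo : Ioo ε b ⊆ Ioo 0 b := Ioo_subset_Ioo_left hε.1.le
  have hε' : ε ∈ Ioc 0 b := hεIcc (left_mem_Icc.2 hε.2.le)
  have hΦε := bondiLyapunov_nonneg (v := v) (averagedWeight_nonneg hg htg hε')
    ((hg ε hε').symm ▸ (Real.exp_pos _).le)
  have hεΦ := integral_two_mul_bondiRhs_le_sub hε.1 hε.2.le (fun r hr => hvd r (hεIoo hr))
    (fun r hr => hasDerivAt_weight hg hh (hεIoo hr))
    (fun r hr => hasDerivAt_averagedWeight hg hh hh0 htg (hεIoo hr))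
    (fun r hr => averagedWeight_nonneg hg htg (Ioo_subset_Ioc_self (hεIoo hr)))
    (fun r hr => averagedWeight_le_weight hg hh hh0 htg (Ioo_subset_Ioc_self (hεIoo hr)))
    (hΦc.mono hεIcc) (hF.mono_set (Icc_subset_Icc_left hε.1.le))
  linarith

noncomputable def fstPartial (f : ℝ × ℝ → ℝ) (K : Set (ℝ × ℝ)) (p : ℝ × ℝ) : ℝ :=
  fderivWithin ℝ f K p (1, 0)

section Rectangle

variable {f : ℝ × ℝ → ℝ} {t₀ t₁ a b : ℝ}

lemma hasDerivAt_fstPartial {s t : Set ℝ} {τ r : ℝ}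
    (hf : DifferentiableWithinAt ℝ f (s ×ˢ t) (τ, r)) (hs : s ∈ 𝓝 τ) (hr : r ∈ t) :
    HasDerivAt (fun x => f (x, r)) (fstPartial f (s ×ˢ t) (τ, r)) τ :=
  (hf.hasFDerivWithinAt.comp_hasDerivWithinAt τ
    ((hasDerivAt_id τ).prodMk (hasDerivAt_const τ r)).hasDerivWithinAt
    fun _ hx => mk_mem_prod hx hr).hasDerivAt hs

lemma continuousOn_fstPartial (hf : ContDiffOn ℝ 1 f (Icc t₀ t₁ ×ˢ Icc a b)) (ht : t₀ < t₁)
    (hab : a < b) :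
    ContinuousOn (fstPartial f (Icc t₀ t₁ ×ˢ Icc a b)) (Icc t₀ t₁ ×ˢ Icc a b) :=
  (hf.continuousOn_fderivWithin ((uniqueDiffOn_Icc ht).prod (uniqueDiffOn_Icc hab))
    le_rfl).clm_apply continuousOn_const

lemma continuousOn_intervalIntegral_of_continuousOn (hf : ContinuousOn f (Icc t₀ t₁ ×ˢ Icc a b))
    (ht : t₀ ≤ t₁) (hab : a ≤ b) :
    ContinuousOn (fun t => ∫ r in a..b, f (t, r)) (Icc t₀ t₁) := by
  set F : ℝ × ℝ → ℝ := fun p => f (projIcc t₀ t₁ ht p.1, projIcc a b hab p.2)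
  have hF : Continuous F := hf.comp_continuous
    ((continuous_subtype_val.comp continuous_projIcc).comp continuous_fst |>.prodMk
      ((continuous_subtype_val.comp continuous_projIcc).comp continuous_snd))
    fun p => mk_mem_prod (projIcc t₀ t₁ ht p.1).2 (projIcc a b hab p.2).2
  refine (continuous_parametric_intervalIntegral_of_continuous' (μ := volume)
    (f := fun t r => F (t, r)) hF a b).continuousOn.congr fun t ht' => integral_congr fun r hr => ?_
  rw [uIcc_of_le hab] at hr
  simp [F, projIcc_of_mem ht ht', projIcc_of_mem hab hr]

lemma hasDerivAt_intervalIntegral_of_contDiffOn (hf : ContDiffOn ℝ 1 f (Icc t₀ t₁ ×ˢ Icc a b))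
    (hab : a < b) {τ : ℝ} (hτ : τ ∈ Ioo t₀ t₁) :
    HasDerivAt (fun t => ∫ r in a..b, f (t, r))
      (∫ r in a..b, fstPartial f (Icc t₀ t₁ ×ˢ Icc a b) (τ, r)) τ := by
  set K := Icc t₀ t₁ ×ˢ Icc a b
  have hK : IsCompact K := isCompact_Icc.prod isCompact_Icc
  have hD := continuousOn_fstPartial hf (hτ.1.trans hτ.2) hab
  obtain ⟨C, hC⟩ := hK.exists_bound_of_continuousOn hD
  have hIoc : Ι a b ⊆ Icc a b := by rw [uIoc_of_le hab.le]; exact Ioc_subset_Icc_self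
  have hslice : ∀ x ∈ Ioo t₀ t₁, ContinuousOn (fun r => f (x, r)) (Icc a b) := fun x hx =>
    hf.continuousOn.uncurry_left (f := Function.curry f) x (Ioo_subset_Icc_self hx)
  refine (hasDerivAt_integral_of_dominated_loc_of_deriv_le (F := fun x r => f (x, r))
    (F' := fun x r => fstPartial f K (x, r)) (bound := fun _ => C)
    (Ioo_mem_nhds hτ.1 hτ.2) ?_ ?_ ?_ ?_ intervalIntegrable_const ?_).2
  · filter_upwards [Ioo_mem_nhds hτ.1 hτ.2] with x hx
    exact ((hslice x hx).mono hIoc).aestronglyMeasurable measurableSet_uIoc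
  · exact ((hslice τ hτ).mono (uIcc_of_le hab.le).le).intervalIntegrable
  · exact ((hD.uncurry_left (f := Function.curry (fstPartial f K)) τ
      (Ioo_subset_Icc_self hτ)).mono hIoc).aestronglyMeasurable measurableSet_uIoc
  · exact Eventually.of_forall fun r hr x hx => hC _ ⟨Ioo_subset_Icc_self hx, hIoc hr⟩
  · exact Eventually.of_forall fun r hr x hx => hasDerivAt_fstPartial
      (hf.differentiableOn one_ne_zero _ ⟨Ioo_subset_Icc_self hx, hIoc hr⟩)
      (Icc_mem_nhds hx.1 hx.2) (hIoc hr)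

lemma intervalIntegral_sub_le_of_fstPartial_le {t : ℝ} {φ : ℝ → ℝ}
    (hf : ContDiffOn ℝ 1 f (Icc t₀ t₁ ×ˢ Icc a b)) (hab : a < b) (ht : t ∈ Icc t₀ t₁)
    (hφ : IntegrableOn φ (Icc t₀ t))
    (h : ∀ τ ∈ Ioo t₀ t, ∫ r in a..b, fstPartial f (Icc t₀ t₁ ×ˢ Icc a b) (τ, r) ≤ φ τ) :
    (∫ r in a..b, f (t, r)) - ∫ r in a..b, f (t₀, r) ≤ ∫ τ in t₀..t, φ τ :=
  sub_le_integral_of_hasDeriv_right_of_le ht.1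
    ((continuousOn_intervalIntegral_of_continuousOn hf.continuousOn (ht.1.trans ht.2) hab.le).mono
      (Icc_subset_Icc_right ht.2))
    (fun _ hτ => (hasDerivAt_intervalIntegral_of_contDiffOn hf hab
      ⟨hτ.1, hτ.2.trans_le ht.2⟩).hasDerivWithinAt) hφ h

end Rectangle

theorem integral_fstPartial_sq_le {u tu g tg : ℝ → ℝ → ℝ} {T b τ : ℝ} (hb : 0 < b)
    (hu : ContDiffOn ℝ 1 (fun p : ℝ × ℝ => u p.1 p.2) (Icc 0 T ×ˢ Icc 0 b)) (hτ : τ ∈ Ioo 0 T)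
    (htu : ∀ r ∈ Ioc 0 b, tu τ r = radialAverage (u τ) r)
    (hg : ∀ r ∈ Ioc 0 b, g τ r = Real.exp (-∫ s in r..b, 1 / s * (u τ s - tu τ s) ^ 2))
    (htg : ∀ r ∈ Ioc 0 b, tg τ r = radialAverage (g τ) r)
    (hPDE : ∀ r ∈ Ioo 0 b, HasDerivAt (fun x => u x r) (bondiRhs (u τ) (tu τ) (tg τ) r) τ) :
    ∫ r in (0:ℝ)..b, fstPartial (fun p : ℝ × ℝ => u p.1 p.2 ^ 2) (Icc 0 T ×ˢ Icc 0 b) (τ, r)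
      ≤ 1 / 2 * u τ b ^ 2 + 1 / 2 := by
  set K := Icc 0 T ×ˢ Icc 0 b
  have hτ' := Ioo_subset_Icc_self hτ
  have hK : ∀ r ∈ Ioo 0 b, K ∈ 𝓝 (τ, r) := fun r hr =>
    prod_mem_nhds (Icc_mem_nhds hτ.1 hτ.2) (Icc_mem_nhds hr.1 hr.2)
  have hvd : ∀ r ∈ Ioo 0 b, DifferentiableAt ℝ (u τ) r := fun r hr =>
    ((hu.differentiableOn one_ne_zero _ (mem_of_mem_nhds (hK r hr))).differentiableAt
      (hK r hr)).comp r ((differentiableAt_const τ).prodMk differentiableAt_id)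
  have hde : EqOn (fun r => fstPartial (fun p : ℝ × ℝ => u p.1 p.2 ^ 2) K (τ, r))
      (fun r => 2 * u τ r * bondiRhs (u τ) (tu τ) (tg τ) r) (Ioo 0 b) := fun r hr =>
    (hasDerivAt_fstPartial ((hu.pow 2).differentiableOn one_ne_zero _ (mem_of_mem_nhds (hK r hr)))
      (Icc_mem_nhds hτ.1 hτ.2) (Ioo_subset_Icc_self hr)).unique
      (by simpa using (hPDE r hr).fun_pow 2)
  have hint : IntegrableOn (fun r => fstPartial (fun p : ℝ × ℝ => u p.1 p.2 ^ 2) K (τ, r))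
      (Icc 0 b) :=
    ((continuousOn_fstPartial (hu.pow 2) (hτ.1.trans hτ.2) hb).uncurry_left
      (f := Function.curry (fstPartial (fun p : ℝ × ℝ => u p.1 p.2 ^ 2) K)) τ hτ').integrableOn_Icc
  rw [integral_congr_Ioo_of_le hb.le hde]
  refine integral_two_mul_bondiRhs_le hb (hu.continuousOn.uncurry_left τ hτ') hvd htu hg htg ?_
  rw [integrableOn_Icc_iff_integrableOn_Ioo enorm_ne_top enorm_ne_top] at hint ⊢
  exact hint.congr_fun hde measurableSet_Ioo

theorem stmt14_general (b T : ℝ) (hb : 0 < b)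
    (Ub : ℝ → ℝ) (hUb : ContinuousOn Ub (Set.Icc 0 T))
    (u tu g tg : ℝ → ℝ → ℝ)
    (hu : ContDiffOn ℝ 1 (fun p : ℝ × ℝ => u p.1 p.2) (Set.Icc 0 T ×ˢ Set.Icc 0 b))
    (htu : ∀ t ∈ Set.Icc 0 T, ∀ r ∈ Set.Ioc 0 b,
      tu t r = (1 / r) * ∫ s in (0:ℝ)..r, u t s)
    (hg : ∀ t ∈ Set.Icc 0 T, ∀ r ∈ Set.Icc 0 b,
      g t r = Real.exp (-(∫ s in r..b, (1 / s) * (u t s - tu t s) ^ 2)))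
    (htg : ∀ t ∈ Set.Icc 0 T, ∀ r ∈ Set.Ioc 0 b,
      tg t r = (1 / r) * ∫ s in (0:ℝ)..r, g t s)
    (hPDE : ∀ t ∈ Set.Ioo 0 T, ∀ r ∈ Set.Ioo 0 b,
      HasDerivAt (fun τ => u τ r)
        (deriv (fun x => (1 / 2) * tg t x * u t x) r
          - (1 / 2) * deriv (fun x => tg t x) r * tu t r) t)
    (hub : ∀ t ∈ Set.Icc 0 T, u t b = Ub t) :
    ∀ t ∈ Set.Icc 0 T,
      (∫ r in (0:ℝ)..b, (u t r) ^ 2)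
        ≤ (∫ r in (0:ℝ)..b, (u 0 r) ^ 2)
          + (1 / 2) * (∫ s in (0:ℝ)..t, (Ub s) ^ 2) + t / 2 := by
  intro t ht
  have hUb2 : IntervalIntegrable (fun s => Ub s ^ 2) volume 0 t :=
    ((hUb.pow 2).mono (Icc_subset_Icc_right ht.2)).intervalIntegrable_of_Icc ht.1
  have henergy := intervalIntegral_sub_le_of_fstPartial_le (hu.pow 2) hb ht
    ((intervalIntegrable_iff_integrableOn_Icc_of_le ht.1).1
      ((hUb2.const_mul (1 / 2)).add (intervalIntegrable_const (c := (1 / 2 : ℝ)))))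
    fun τ hτ => by
      have hτ' : τ ∈ Ioo 0 T := ⟨hτ.1, hτ.2.trans_le ht.2⟩
      have hτI := Ioo_subset_Icc_self hτ'
      rw [← hub τ hτI]
      exact integral_fstPartial_sq_le hb hu hτ' (htu τ hτI)
        (fun r hr => hg τ hτI r (Ioc_subset_Icc_self hr)) (htg τ hτI) (hPDE τ hτ')
  rw [integral_add (hUb2.const_mul _) intervalIntegrable_const,
    intervalIntegral.integral_const_mul, intervalIntegral.integral_const] at henergy
  simp only [smul_eq_mul, sub_zero] at henergy
  linarith

/-- Integrated (Grönwall) form of the L²-stability estimate (Theorem 3.1):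
`∫_0^b u(t,r)² dr ≤ ∫_0^b u(0,r)² dr + (1/2)∫_0^t U_b(s)² ds + t/2`. -/
theorem stmt14 (b T : ℝ) (hb : 0 < b) (hT : 0 < T)
    (Ub : ℝ → ℝ) (hUb : ContinuousOn Ub (Set.Icc 0 T))
    (u tu g tg : ℝ → ℝ → ℝ)
    (hu : ContDiffOn ℝ 1 (fun p : ℝ × ℝ => u p.1 p.2) (Set.Icc 0 T ×ˢ Set.Icc 0 b))
    (htu : ∀ t ∈ Set.Icc 0 T, ∀ r ∈ Set.Ioc 0 b,
      tu t r = (1 / r) * ∫ s in (0:ℝ)..r, u t s)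
    (htu0 : ∀ t ∈ Set.Icc 0 T, tu t 0 = u t 0)
    (hg : ∀ t ∈ Set.Icc 0 T, ∀ r ∈ Set.Icc 0 b,
      g t r = Real.exp (-(∫ s in r..b, (1 / s) * (u t s - tu t s) ^ 2)))
    (htg : ∀ t ∈ Set.Icc 0 T, ∀ r ∈ Set.Ioc 0 b,
      tg t r = (1 / r) * ∫ s in (0:ℝ)..r, g t s)
    (hPDE : ∀ t ∈ Set.Ioo 0 T, ∀ r ∈ Set.Ioo 0 b,
      HasDerivAt (fun τ => u τ r)
        (deriv (fun x => (1 / 2) * tg t x * u t x) r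
          - (1 / 2) * deriv (fun x => tg t x) r * tu t r) t)
    (hub : ∀ t ∈ Set.Icc 0 T, u t b = Ub t) :
    ∀ t ∈ Set.Icc 0 T,
      (∫ r in (0:ℝ)..b, (u t r) ^ 2)
        ≤ (∫ r in (0:ℝ)..b, (u 0 r) ^ 2)
          + (1 / 2) * (∫ s in (0:ℝ)..t, (Ub s) ^ 2) + t / 2 :=
  stmt14_general b T hb Ub hUb u tu g tg hu htu hg htg hPDE hub
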